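/- arXiv:math/0601658 — 2 statements merged into one kernel-verified Lean document; each statement's English description precedes it below -/
import Mathlib

section
/- Let m: ℝ → ℝⁿ be continuous with |m(t)| = 1 for all t, and suppose there are constants α', β', c̃ > 0 such that α' I ≤ ∫_t^{t+c̃} m(τ)m(τ)ᵀ dτ ≤ β' I for all t (in the positive semidefinite order). Let f* < 0 and set κ := c̃/(2|f*|) + c̃⁴|f*|/(4α') and P(t) := κ I + ∫_{t−c̃}^t ∫_s^t m(l)m(l)ᵀ dl ds. Then for V(x,t) := xᵀ P(t) x, along the system ẋ = f* m(t)m(t)ᵀ x, the derivative satisfies V_t(x,t) + V_x(x,t)·(f* m(t)m(t)ᵀ x) ≤ −(α'/2)|x|² for all x ∈ ℝⁿ and t ∈ ℝ. -/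
open scoped RealInnerProductSpace

/-! By persistency of excitation over `[t - c̃, t]`, the term `-∫_{t-c̃}^t ⟪m l, x⟫² dl`
contributes `-α'|x|²`. The double integral has size at most `c̃²|x|/2`, and Young's inequality
splits the cross term into `(α'/2)|x|²` plus a multiple of `⟪m t, x⟫²`; `κ` is chosen exactly so
that the coefficient `c̃ + 2 f* κ` of `⟪m t, x⟫²` cancels that multiple. -/

theorem norm_integral_integral_le_of_norm_le_const {E : Type*} [NormedAddCommGroup E]
    [NormedSpace ℝ E] {f : ℝ → E} {C c : ℝ} (hf : ∀ l, ‖f l‖ ≤ C) (hc : 0 ≤ c) (t : ℝ) :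
    ‖∫ s in (t - c)..t, ∫ l in s..t, f l‖ ≤ C * c ^ 2 / 2 := by
  have hinner : ∀ s ∈ Set.Ioc (t - c) t, ‖∫ l in s..t, f l‖ ≤ C * (t - s) := fun s hs => by
    simpa [abs_of_nonneg (sub_nonneg.2 hs.2)] using
      intervalIntegral.norm_integral_le_of_norm_le_const (fun l _ => hf l) (a := s) (b := t)
  calc ‖∫ s in (t - c)..t, ∫ l in s..t, f l‖
      ≤ ∫ s in (t - c)..t, C * (t - s) :=
        intervalIntegral.norm_integral_le_of_norm_le (by linarith)
          (Filter.Eventually.of_forall hinner)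
          ((by fun_prop : Continuous fun s => C * (t - s)).intervalIntegrable _ _)
    _ = C * c ^ 2 / 2 := by
        rw [intervalIntegral.integral_const_mul, intervalIntegral.integral_comp_sub_left
          (fun s => s), integral_id]
        ring

theorem abs_inner_mul_inner_le_of_norm_le_one {E : Type*} [NormedAddCommGroup E]
    [InnerProductSpace ℝ E] {u : E} (hu : ‖u‖ ≤ 1) (x y : E) : |⟪u, x⟫ * ⟪u, y⟫| ≤ ‖x‖ * ‖y‖ := by
  rw [abs_mul]
  have hx : |⟪u, x⟫| ≤ ‖x‖ :=
    (abs_real_inner_le_norm u x).trans (mul_le_of_le_one_left (norm_nonneg x) hu)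
  have hy : |⟪u, y⟫| ≤ ‖y‖ :=
    (abs_real_inner_le_norm u y).trans (mul_le_of_le_one_left (norm_nonneg y) hu)
  exact mul_le_mul hx hy (abs_nonneg _) (norm_nonneg x)

theorem mul_le_half_mul_sq_add_sq_div {ε : ℝ} (hε : 0 < ε) (p q : ℝ) :
    p * q ≤ ε / 2 * p ^ 2 + q ^ 2 / (2 * ε) := by
  have hgap : ε / 2 * p ^ 2 + q ^ 2 / (2 * ε) - p * q = (ε * p - q) ^ 2 / (2 * ε) := by
    field_simp
    ring
  linarith [div_nonneg (sq_nonneg (ε * p - q)) (by positivity : (0 : ℝ) ≤ 2 * ε)]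

theorem stmt8_general {n : ℕ} (m : ℝ → EuclideanSpace ℝ (Fin n))
    (hnorm : ∀ t : ℝ, ‖m t‖ = 1)
    (α' c' : ℝ) (hα' : 0 < α') (hc' : 0 < c')
    (hlow : ∀ (t : ℝ) (x : EuclideanSpace ℝ (Fin n)),
      α' * ‖x‖ ^ 2 ≤ ∫ τ in t..(t + c'), ⟪m τ, x⟫ ^ 2)
    (fs : ℝ) (hfs : fs < 0)
    (κ : ℝ) (hκ : κ = c' / (2 * |fs|) + c' ^ 4 * |fs| / (4 * α'))
    (x : EuclideanSpace ℝ (Fin n)) (t : ℝ) :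
    c' * ⟪m t, x⟫ ^ 2 - (∫ l in (t - c')..t, ⟪m l, x⟫ ^ 2)
      + 2 * fs * κ * ⟪m t, x⟫ ^ 2
      + 2 * fs * ⟪m t, x⟫ *
        (∫ s in (t - c')..t, ∫ l in s..t, ⟪m l, x⟫ * ⟪m l, m t⟫)
      ≤ -(α' / 2) * ‖x‖ ^ 2 := by
  set a := ⟪m t, x⟫
  set D := ∫ s in (t - c')..t, ∫ l in s..t, ⟪m l, x⟫ * ⟪m l, m t⟫
  have hpersist : α' * ‖x‖ ^ 2 ≤ ∫ l in (t - c')..t, ⟪m l, x⟫ ^ 2 := by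
    simpa using hlow (t - c') x
  have hD : |D| ≤ ‖x‖ * c' ^ 2 / 2 := by
    simpa [hnorm t] using norm_integral_integral_le_of_norm_le_const
      (f := fun l => ⟪m l, x⟫ * ⟪m l, m t⟫)
      (fun l => abs_inner_mul_inner_le_of_norm_le_one (hnorm l).le x (m t)) hc'.le t
  have hcross : 2 * fs * a * D ≤ ‖x‖ * (c' ^ 2 * |fs * a|) :=
    calc 2 * fs * a * D ≤ 2 * |fs * a| * |D| := by
          linarith [abs_mul (fs * a) D ▸ le_abs_self (fs * a * D)]
      _ ≤ 2 * |fs * a| * (‖x‖ * c' ^ 2 / 2) := by gcongr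
      _ = ‖x‖ * (c' ^ 2 * |fs * a|) := by ring
  have hyoung := mul_le_half_mul_sq_add_sq_div hα' ‖x‖ (c' ^ 2 * |fs * a|)
  have hsq : (c' ^ 2 * |fs * a|) ^ 2 = c' ^ 4 * fs ^ 2 * a ^ 2 := by
    rw [mul_pow, sq_abs]; ring
  have hκ' : c' + 2 * fs * κ = -(c' ^ 4 * fs ^ 2 / (2 * α')) := by
    rw [hκ, abs_of_neg hfs]
    field_simp [hfs.ne]
    ring
  rw [hsq] at hyoung
  linear_combination hpersist + hcross + hyoung + a ^ 2 * hκ'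

/-- for `V(x,t) = xᵀP(t)x` with
`P(t) = κI + ∫_{t−c̃}^t ∫_s^t m(l)m(l)ᵀ dl ds`, along `ẋ = f* m(t)m(t)ᵀ x` we have
`V_t + V_x·f ≤ −(α'/2)|x|²`.  Here `xᵀ m(l)m(l)ᵀ x = ⟪m l, x⟫²`, and
`V_t + V_x·(f*⟪m t,x⟫ m t) = c̃⟪m t,x⟫² − ∫_{t−c̃}^t ⟪m l,x⟫² dl
 + 2f*κ⟪m t,x⟫² + 2f*⟪m t,x⟫ ∫_{t−c̃}^t ∫_s^t ⟪m l,x⟫⟪m l,m t⟫ dl ds`. -/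
theorem stmt8 {n : ℕ} (m : ℝ → EuclideanSpace ℝ (Fin n))
    (hm : Continuous m) (hnorm : ∀ t : ℝ, ‖m t‖ = 1)
    (α' β' c' : ℝ) (hα' : 0 < α') (hβ' : 0 < β') (hc' : 0 < c')
    (hlow : ∀ (t : ℝ) (x : EuclideanSpace ℝ (Fin n)),
      α' * ‖x‖ ^ 2 ≤ ∫ τ in t..(t + c'), ⟪m τ, x⟫ ^ 2)
    (hup : ∀ (t : ℝ) (x : EuclideanSpace ℝ (Fin n)),
      (∫ τ in t..(t + c'), ⟪m τ, x⟫ ^ 2) ≤ β' * ‖x‖ ^ 2)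
    (fs : ℝ) (hfs : fs < 0)
    (κ : ℝ) (hκ : κ = c' / (2 * |fs|) + c' ^ 4 * |fs| / (4 * α'))
    (x : EuclideanSpace ℝ (Fin n)) (t : ℝ) :
    c' * ⟪m t, x⟫ ^ 2 - (∫ l in (t - c')..t, ⟪m l, x⟫ ^ 2)
      + 2 * fs * κ * ⟪m t, x⟫ ^ 2
      + 2 * fs * ⟪m t, x⟫ *
        (∫ s in (t - c')..t, ∫ l in s..t, ⟪m l, x⟫ * ⟪m l, m t⟫)
      ≤ -(α' / 2) * ‖x‖ ^ 2 :=
  stmt8_general m hnorm α' c' hα' hc' hlow fs hfs κ hκ x t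
end

section
/- Suppose V ∈ C¹(ℝⁿ × [0,∞); ℝ), W: ℝⁿ × [0,∞) → [0,∞), Θ ∈ C¹(ℝⁿ × [0,∞); ℝ), p: ℝ → ℝ continuous and bounded by p_max, and constants c, T > 0 satisfy: (H1) V_t(x,t) + V_x(x,t)·f(x,t,αt) ≤ −W(x,t) + p(αt)Θ(x,t); (H2) ∫_{kT}^{(k+1)T} p(r) dr = 0 for all k ∈ ℤ; (H3) V(x,t) ≥ c|Θ(x,t)| and W(x,t) ≥ c·max{|Θ(x,t)|, |Θ_t(x,t) + Θ_x(x,t)f(x,t,αt)|}, all holding for all x ∈ ℝⁿ, t ≥ 0, α > 0. Define U^{[α]}(x,t) := V(x,t) − (∫_{t−1}^t (∫_s^t p(αl) dl) ds) Θ(x,t). Then for every constant α > 8Tp_max/c and every t ≥ 1, along any trajectory of ẋ = f(x,t,αt) the time derivative of U^{[α]}(x(t),t) is at most −W(x(t),t)/2. -/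
open intervalIntegral MeasureTheory

/-!
Differentiating the window average gives
`d/dt ∫_{t-1}^t ∫_s^t p(αl) dl ds = p(αt) - ∫_{t-1}^t p(αl) dl`, so in the derivative of
`U^{[α]}` the term `p(αt) Θ` cancels the one allowed by (H1). What is left are products of
`Θ` or its derivative along the flow with `∫_{t-1}^t p(αl) dl` or the double integral.
By (H2) the primitive of `p` vanishes at every multiple of `T`, hence is bounded by `T p_max`;
after rescaling, both integrals are at most `2 T p_max / α < c / 4`, and (H3) turns each
product into at most `W / 4`.
-/

theorem MeasureTheory.LocallyIntegrable.intervalIntegrable {E : Type*} [NormedAddCommGroup E]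
    {f : ℝ → E} (hf : LocallyIntegrable f volume) (a b : ℝ) : IntervalIntegrable f volume a b :=
  (hf.integrableOn_isCompact isCompact_uIcc).intervalIntegrable

section IntegralBounds

variable {p : ℝ → ℝ} {T : ℝ}

theorem integral_zero_intCast_mul_eq_zero (hp : LocallyIntegrable p volume)
    (hblock : ∀ k : ℤ, ∫ r in (k * T)..((k + 1) * T), p r = 0) (k : ℤ) :
    ∫ r in (0 : ℝ)..(k * T), p r = 0 := by
  induction k using Int.induction_on with
  | zero => simp
  | succ k ih =>
    rw [← integral_add_adjacent_intervals (hp.intervalIntegrable _ _)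
      (hp.intervalIntegrable _ _), ih, zero_add]
    exact_mod_cast hblock k
  | pred k ih =>
    have hk := hblock (-k - 1)
    rw [← integral_add_adjacent_intervals (hp.intervalIntegrable _ ((-k - 1 : ℤ) * T))
      (hp.intervalIntegrable _ _)] at ih
    push_cast at hk ih ⊢
    rw [sub_add_cancel] at hk
    linarith

theorem abs_integral_zero_le (hp : LocallyIntegrable p volume) {pmax : ℝ}
    (hpb : ∀ l, |p l| ≤ pmax) (hT : 0 < T)
    (hblock : ∀ k : ℤ, ∫ r in (k * T)..((k + 1) * T), p r = 0) (u : ℝ) :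
    |∫ r in (0 : ℝ)..u, p r| ≤ T * pmax := by
  set k := ⌊u / T⌋
  have hku : (k : ℝ) * T ≤ u := (le_div_iff₀ hT).mp (Int.floor_le _)
  have huk : u < (k : ℝ) * T + T := by
    have := (div_lt_iff₀ hT).mp (Int.lt_floor_add_one (u / T))
    linarith
  have hsplit : ∫ r in (0 : ℝ)..u, p r = ∫ r in (k * T)..u, p r := by
    rw [← integral_interval_sub_left (a := 0) (c := k * T) (hp.intervalIntegrable _ _)
      (hp.intervalIntegrable _ _), integral_zero_intCast_mul_eq_zero hp hblock k, sub_zero]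
  calc |∫ r in (0 : ℝ)..u, p r|
      ≤ pmax * |u - k * T| := by
        rw [hsplit, ← Real.norm_eq_abs]
        exact norm_integral_le_of_norm_le_const fun r _ => hpb r
    _ ≤ T * pmax := by
        rw [abs_of_nonneg (by linarith), mul_comm T]
        exact mul_le_mul_of_nonneg_left (by linarith) ((abs_nonneg _).trans (hpb 0))

theorem abs_intervalIntegral_le (hp : LocallyIntegrable p volume) {pmax : ℝ}
    (hpb : ∀ l, |p l| ≤ pmax) (hT : 0 < T)
    (hblock : ∀ k : ℤ, ∫ r in (k * T)..((k + 1) * T), p r = 0) (a b : ℝ) :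
    |∫ r in a..b, p r| ≤ 2 * T * pmax := by
  rw [← integral_interval_sub_left (a := 0) (hp.intervalIntegrable _ _)
    (hp.intervalIntegrable _ _)]
  have ha := abs_integral_zero_le hp hpb hT hblock a
  have hb := abs_integral_zero_le hp hpb hT hblock b
  linarith [abs_sub (∫ r in (0 : ℝ)..b, p r) (∫ r in (0 : ℝ)..a, p r)]

theorem abs_intervalIntegral_comp_mul_le (hp : LocallyIntegrable p volume) {pmax : ℝ}
    (hpb : ∀ l, |p l| ≤ pmax) (hT : 0 < T)
    (hblock : ∀ k : ℤ, ∫ r in (k * T)..((k + 1) * T), p r = 0) {α : ℝ} (hα : 0 < α)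
    (a b : ℝ) : |∫ l in a..b, p (α * l)| ≤ 2 * T * pmax / α := by
  rw [integral_comp_mul_left p hα.ne', smul_eq_mul, abs_mul, abs_inv, abs_of_pos hα,
    inv_mul_eq_div]
  exact div_le_div_of_nonneg_right (abs_intervalIntegral_le hp hpb hT hblock _ _) hα.le

end IntegralBounds

section WindowIntegral

variable {q : ℝ → ℝ}

theorem abs_integral_integral_le {B : ℝ} (hq : ∀ a b, |∫ l in a..b, q l| ≤ B) (h τ : ℝ) :
    |∫ s in (τ - h)..τ, ∫ l in s..τ, q l| ≤ B * |h| := by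
  have := norm_integral_le_of_norm_le_const (a := τ - h) (b := τ) fun s _ =>
    (Real.norm_eq_abs _).trans_le (hq s τ)
  rwa [sub_sub_cancel, Real.norm_eq_abs] at this

theorem hasDerivAt_integral_integral (hq : Continuous q) (h t : ℝ) :
    HasDerivAt (fun τ => ∫ s in (τ - h)..τ, ∫ l in s..τ, q l)
      (h * q t - ∫ l in (t - h)..t, q l) t := by
  set G : ℝ → ℝ := fun u => ∫ l in (0 : ℝ)..u, q l
  have hG : ∀ u, HasDerivAt G (q u) u := fun u => (hq.integral_hasStrictDerivAt 0 u).hasDerivAt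
  have hGc : Continuous G := continuous_iff_continuousAt.2 fun u => (hG u).continuousAt
  set H : ℝ → ℝ := fun u => ∫ s in (0 : ℝ)..u, G s
  have hH : ∀ u, HasDerivAt H (G u) u := fun u => (hGc.integral_hasStrictDerivAt 0 u).hasDerivAt
  have hGsub : ∀ a b, ∫ l in a..b, q l = G b - G a := fun a b =>
    (integral_interval_sub_left (hq.intervalIntegrable 0 b) (hq.intervalIntegrable 0 a)).symm
  have hwindow : ∀ τ, ∫ s in (τ - h)..τ, ∫ l in s..τ, q l = h * G τ - (H τ - H (τ - h)) := by
    intro τ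
    simp_rw [hGsub _ τ]
    rw [integral_sub intervalIntegrable_const (hGc.intervalIntegrable _ _),
      intervalIntegral.integral_const, smul_eq_mul, sub_sub_cancel,
      integral_interval_sub_left (hGc.intervalIntegrable 0 τ) (hGc.intervalIntegrable 0 (τ - h))]
  rw [hGsub, funext hwindow]
  exact ((hG t).const_mul h).sub ((hH t).sub ((hH (t - h)).comp_sub_const t h))

end WindowIntegral

theorem hasDerivAt_comp_prodMk_id {E F : Type*} [NormedAddCommGroup E] [NormedSpace ℝ E]
    [NormedAddCommGroup F] [NormedSpace ℝ F] {V : E × ℝ → F} {x : ℝ → E} {v : E} {t : ℝ}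
    (hV : DifferentiableAt ℝ V (x t, t)) (hx : HasDerivAt x v t) :
    HasDerivAt (fun τ => V (x τ, τ)) (fderiv ℝ V (x t, t) (v, 1)) t :=
  hV.hasFDerivAt.comp_hasDerivAt_of_eq t (hx.prodMk (hasDerivAt_id t)) rfl

theorem sub_le_neg_half_of_abs_le {dV w c B I P a θ θ' : ℝ} (hdV : dV ≤ -w + a * θ)
    (hI : |I| ≤ B) (hP : |P| ≤ B) (hw : c * max |θ| |θ'| ≤ w) (hBc : 4 * B ≤ c) :
    dV - ((a - I) * θ + P * θ') ≤ -w / 2 := by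
  have hc : 0 ≤ c := by linarith [abs_nonneg I]
  have hIθ : I * θ ≤ B * |θ| :=
    (le_abs_self _).trans (by rw [abs_mul]; exact mul_le_mul_of_nonneg_right hI (abs_nonneg _))
  have hPθ' : -(P * θ') ≤ B * |θ'| :=
    (neg_le_abs _).trans (by rw [abs_mul]; exact mul_le_mul_of_nonneg_right hP (abs_nonneg _))
  have hθ : 4 * B * |θ| ≤ w := (mul_le_mul_of_nonneg_right hBc (abs_nonneg _)).trans
    ((mul_le_mul_of_nonneg_left (le_max_left _ _) hc).trans hw)
  have hθ' : 4 * B * |θ'| ≤ w := (mul_le_mul_of_nonneg_right hBc (abs_nonneg _)).trans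
    ((mul_le_mul_of_nonneg_left (le_max_right _ _) hc).trans hw)
  linarith

theorem stmt10_general {n : ℕ}
    (V Θ : EuclideanSpace ℝ (Fin n) × ℝ → ℝ)
    (hV : ContDiff ℝ 1 V) (hΘ : ContDiff ℝ 1 Θ)
    (W : EuclideanSpace ℝ (Fin n) × ℝ → ℝ)
    (f : EuclideanSpace ℝ (Fin n) → ℝ → ℝ → EuclideanSpace ℝ (Fin n))
    (p : ℝ → ℝ) (hp : Continuous p)
    (pmax : ℝ) (hpb : ∀ l : ℝ, |p l| ≤ pmax)
    (c T : ℝ) (hc : 0 < c) (hT : 0 < T)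
    (H1 : ∀ (x : EuclideanSpace ℝ (Fin n)) (t α : ℝ), 0 ≤ t → 0 < α →
      fderiv ℝ V (x, t) (f x t (α * t), 1) ≤ -W (x, t) + p (α * t) * Θ (x, t))
    (H2 : ∀ k : ℤ, ∫ r in (k * T)..((k + 1) * T), p r = 0)
    (H3b : ∀ (x : EuclideanSpace ℝ (Fin n)) (t α : ℝ), 0 ≤ t → 0 < α →
      c * max (|Θ (x, t)|) (|fderiv ℝ Θ (x, t) (f x t (α * t), 1)|) ≤ W (x, t))
    (α : ℝ) (hα : 8 * T * pmax / c < α)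
    (x : ℝ → EuclideanSpace ℝ (Fin n))
    (hx : ∀ t : ℝ, HasDerivAt x (f (x t) t (α * t)) t)
    (t : ℝ) (ht : 1 ≤ t) :
    ∃ d : ℝ,
      HasDerivAt (fun τ =>
          V (x τ, τ) - (∫ s in (τ - 1)..τ, ∫ l in s..τ, p (α * l)) * Θ (x τ, τ))
        d t ∧ d ≤ -W (x t, t) / 2 := by
  have hpmax : 0 ≤ pmax := (abs_nonneg _).trans (hpb 0)
  have hα0 : 0 < α := lt_of_le_of_lt (by positivity) hα
  have ht0 : 0 ≤ t := by linarith
  have hB : ∀ a b, |∫ l in a..b, p (α * l)| ≤ 2 * T * pmax / α :=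
    abs_intervalIntegral_comp_mul_le hp.locallyIntegrable hpb hT H2 hα0
  have hBc : 4 * (2 * T * pmax / α) ≤ c := by
    rw [div_lt_iff₀ hc] at hα
    rw [mul_div_assoc', div_le_iff₀ hα0]
    linarith
  have hVd := hasDerivAt_comp_prodMk_id (hV.differentiable one_ne_zero _) (hx t)
  have hΘd := hasDerivAt_comp_prodMk_id (hΘ.differentiable one_ne_zero _) (hx t)
  have hPd := hasDerivAt_integral_integral (hp.comp (continuous_const_mul α)) 1 t
  refine ⟨_, hVd.sub (hPd.mul hΘd), ?_⟩
  rw [one_mul]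
  exact sub_le_neg_half_of_abs_le (H1 _ _ _ ht0 hα0) (hB _ _)
    (by simpa using abs_integral_integral_le hB 1 t) (H3b _ _ _ ht0 hα0) hBc

/-- Theorem: strictification under Assumption H: with
`U^{[α]}(x,t) = V(x,t) − (∫_{t−1}^t ∫_s^t p(αl) dl ds) Θ(x,t)`, for every
`α > 8Tp_max/c` and `t ≥ 1`, the time derivative of `t ↦ U^{[α]}(x(t),t)`
along a trajectory of `ẋ = f(x,t,αt)` is at most `−W(x(t),t)/2`. -/
theorem stmt10 {n : ℕ}
    (V Θ : EuclideanSpace ℝ (Fin n) × ℝ → ℝ)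
    (hV : ContDiff ℝ 1 V) (hΘ : ContDiff ℝ 1 Θ)
    (W : EuclideanSpace ℝ (Fin n) × ℝ → ℝ) (hW : ∀ q, 0 ≤ W q)
    (f : EuclideanSpace ℝ (Fin n) → ℝ → ℝ → EuclideanSpace ℝ (Fin n))
    (hf : Continuous fun q : EuclideanSpace ℝ (Fin n) × ℝ × ℝ =>
      f q.1 q.2.1 q.2.2)
    (p : ℝ → ℝ) (hp : Continuous p)
    (pmax : ℝ) (hpmax : 0 < pmax) (hpb : ∀ l : ℝ, |p l| ≤ pmax)
    (c T : ℝ) (hc : 0 < c) (hT : 0 < T)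
    (H1 : ∀ (x : EuclideanSpace ℝ (Fin n)) (t α : ℝ), 0 ≤ t → 0 < α →
      fderiv ℝ V (x, t) (f x t (α * t), 1) ≤ -W (x, t) + p (α * t) * Θ (x, t))
    (H2 : ∀ k : ℤ, ∫ r in (k * T)..((k + 1) * T), p r = 0)
    (H3a : ∀ (x : EuclideanSpace ℝ (Fin n)) (t : ℝ), 0 ≤ t →
      c * |Θ (x, t)| ≤ V (x, t))
    (H3b : ∀ (x : EuclideanSpace ℝ (Fin n)) (t α : ℝ), 0 ≤ t → 0 < α →
      c * max (|Θ (x, t)|) (|fderiv ℝ Θ (x, t) (f x t (α * t), 1)|) ≤ W (x, t))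
    (α : ℝ) (hα : 8 * T * pmax / c < α)
    (x : ℝ → EuclideanSpace ℝ (Fin n))
    (hx : ∀ t : ℝ, HasDerivAt x (f (x t) t (α * t)) t)
    (t : ℝ) (ht : 1 ≤ t) :
    ∃ d : ℝ,
      HasDerivAt (fun τ =>
          V (x τ, τ) - (∫ s in (τ - 1)..τ, ∫ l in s..τ, p (α * l)) * Θ (x τ, τ))
        d t ∧ d ≤ -W (x t, t) / 2 :=
  stmt10_general V Θ hV hΘ W f p hp pmax hpb c T hc hT H1 H2 H3b α hα x hx t ht
end
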